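/- arXiv:1811.11464 — 3 statements merged into one kernel-verified Lean document; each statement's English description precedes it below -/
import Mathlib

section
/- Let G be a finitely generated group. Then every finitely generated subgroup H of G_bound is virtually abelian, i.e. H contains an abelian subgroup of finite index. -/
/-- A finite symmetric generating set of a group. -/
def IsSymmGen {G : Type*} [Group G] (S : Finset G) : Prop :=
  (∀ s ∈ S, s⁻¹ ∈ S) ∧ Subgroup.closure (S : Set G) = ⊤

/-- The word length of `g` with respect to `S`: the least `n` such that
`g` is a product of `n` elements of `S`. -/
noncomputable def wordLen {G : Type*} [Group G] (S : Finset G) (g : G) : ℕ :=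
  sInf {n : ℕ | ∃ w : List G, (∀ s ∈ w, s ∈ S) ∧ w.length = n ∧ w.prod = g}

/-- Elements of uniformly bounded word length. -/
def GBound (G : Type*) [Group G] : Set G :=
  {g | ∃ M : ℕ, 0 < M ∧ ∀ S : Finset G, IsSymmGen S → wordLen S g ≤ M}

/-!
Conjugating a finite symmetric generating set `S` by `c` gives another one, and the word length
of `c g c⁻¹` with respect to `S` equals that of `g` with respect to `c⁻¹ S c`. Hence the
conjugates of an element of `G_bound` all lie in a fixed ball of the Cayley graph of `S`, so it
has a finite conjugacy class, in `G` and a fortiori in any subgroup containing it. For a finitely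
generated `H ⊆ G_bound`, the center of `H` is the intersection of the centralizers of finitely many
generators, each of finite index, so it is an abelian subgroup of finite index.
-/

section

open Pointwise MulAction

variable {G G' : Type*} [Group G] [Group G']

theorem List.prod_mem_pow {M : Type*} [Monoid M] {U : Set M} {w : List M}
    (hw : ∀ s ∈ w, s ∈ U) : w.prod ∈ U ^ w.length := by
  induction w with
  | nil => exact Set.one_mem_one
  | cons a w ih =>
    rw [List.prod_cons, List.length_cons, pow_succ']
    exact Set.mul_mem_mul (hw a List.mem_cons_self)
      (ih fun s hs => hw s (List.mem_cons_of_mem a hs))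

namespace IsSymmGen

theorem map {S : Finset G} (hS : IsSymmGen S) (e : G ≃* G') :
    IsSymmGen (S.map e.toEquiv.toEmbedding) := by
  refine ⟨fun s hs => ?_, ?_⟩
  · obtain ⟨t, ht, rfl⟩ := Finset.mem_map.mp hs
    exact Finset.mem_map.mpr ⟨t⁻¹, hS.1 t ht, by simp⟩
  · have : ((S.map e.toEquiv.toEmbedding : Finset G') : Set G') = e.toMonoidHom '' S := by
      simp
    rw [this, ← MonoidHom.map_closure, hS.2]
    exact Subgroup.map_top_of_surjective _ e.surjective

theorem exists_list {S : Finset G} (hS : IsSymmGen S) (g : G) :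
    ∃ w : List G, (∀ s ∈ w, s ∈ S) ∧ w.length = wordLen S g ∧ w.prod = g := by
  have hg : g ∈ Submonoid.closure ((S : Set G) ∪ (S : Set G)⁻¹) := by
    rw [← Subgroup.closure_toSubmonoid, hS.2]
    trivial
  obtain ⟨w, hw, rfl⟩ := Submonoid.exists_list_of_mem_closure hg
  have hw' : ∀ s ∈ w, s ∈ S := fun s hs =>
    (hw s hs).elim id fun h => by simpa using hS.1 _ h
  exact Nat.sInf_mem (⟨w.length, w, hw', rfl, rfl⟩ :
    {n : ℕ | ∃ v : List G, (∀ s ∈ v, s ∈ S) ∧ v.length = n ∧ v.prod = w.prod}.Nonempty)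

theorem mem_pow_of_wordLen_le [DecidableEq G] {S : Finset G} (hS : IsSymmGen S) {g : G} {n : ℕ}
    (h : wordLen S g ≤ n) : g ∈ (insert 1 S) ^ n := by
  obtain ⟨w, hw, hlen, rfl⟩ := hS.exists_list g
  rw [← Finset.mem_coe, Finset.coe_pow, Finset.coe_insert]
  refine Set.pow_subset_pow_right (Set.mem_insert 1 _) (hlen ▸ h)
    (Set.pow_subset_pow_left (Set.subset_insert _ _) ?_)
  exact List.prod_mem_pow hw

end IsSymmGen

theorem wordLen_map (e : G ≃* G') (S : Finset G) (g : G) :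
    wordLen (S.map e.toEquiv.toEmbedding) (e g) = wordLen S g := by
  unfold wordLen
  congr 1
  ext n
  constructor
  · rintro ⟨w, hw, rfl, hprod⟩
    refine ⟨w.map e.symm, fun s hs => ?_, List.length_map _, ?_⟩
    · obtain ⟨t, ht, rfl⟩ := List.mem_map.mp hs
      obtain ⟨u, hu, rfl⟩ := Finset.mem_map.mp (hw t ht)
      simpa using hu
    · rw [← map_list_prod, hprod, MulEquiv.symm_apply_apply]
  · rintro ⟨w, hw, rfl, hprod⟩
    refine ⟨w.map e, fun s hs => ?_, List.length_map _, by rw [← map_list_prod, hprod]⟩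
    obtain ⟨t, ht, rfl⟩ := List.mem_map.mp hs
    exact Finset.mem_map_of_mem _ (hw t ht)

theorem exists_isSymmGen [Group.FG G] : ∃ S : Finset G, IsSymmGen S := by
  classical
  obtain ⟨S, hS⟩ := Group.fg_def.mp ‹Group.FG G›
  refine ⟨S ∪ S⁻¹, fun s hs => ?_, eq_top_mono (Subgroup.closure_mono ?_) hS⟩
  · simpa [or_comm] using hs
  · simp

theorem finite_orbit_conjAct_of_mem_GBound [Group.FG G] {g : G} (hg : g ∈ GBound G) :
    (orbit (ConjAct G) g).Finite := by
  classical
  obtain ⟨S, hS⟩ := exists_isSymmGen (G := G)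
  obtain ⟨M, -, hM⟩ := hg
  refine ((insert 1 S ^ M : Finset G).finite_toSet).subset fun h hh => ?_
  obtain ⟨c, rfl⟩ := isConj_iff.mp (ConjAct.mem_orbit_conjAct.mp hh).symm
  refine hS.mem_pow_of_wordLen_le ?_
  rw [← MulAut.conj_apply, ← wordLen_map (MulAut.conj c).symm, MulEquiv.symm_apply_apply]
  exact hM _ (hS.map _)

namespace Subgroup

theorem finiteIndex_centralizer_of_finite_orbit {g : G} (h : (orbit (ConjAct G) g).Finite) :
    (centralizer {g}).FiniteIndex :=
  have : Finite (orbit (ConjAct G) g) := h.to_subtype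
  have : Finite (G ⧸ centralizer {g}) := Finite.of_equiv _
    ((orbitEquivQuotientStabilizer (ConjAct G) g).trans
      (quotientEquivOfEq (ConjAct.stabilizer_eq_centralizer g)))
  finiteIndex_of_finite_quotient

theorem finiteIndex_center_of_finite_orbit [Group.FG G]
    (h : ∀ g : G, (orbit (ConjAct G) g).Finite) : (center G).FiniteIndex := by
  obtain ⟨T, hT⟩ := Group.fg_def.mp ‹Group.FG G›
  rw [center_eq_iInf hT]
  exact finiteIndex_iInf' _ fun g _ => finiteIndex_centralizer_of_finite_orbit (h g)

theorem finite_orbit_conjAct (H : Subgroup G) {t : H} (h : (orbit (ConjAct G) (t : G)).Finite) :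
    (orbit (ConjAct H) t).Finite :=
  (h.preimage Subtype.val_injective.injOn).subset fun _ hs =>
    ConjAct.mem_orbit_conjAct.mpr (H.subtype.map_isConj (ConjAct.mem_orbit_conjAct.mp hs))

end Subgroup

end

/-- Every finitely generated subgroup of `G_bound` is virtually abelian. -/
theorem stmt6 (G : Type*) [Group G] [Group.FG G] (H : Subgroup G) [Group.FG H]
    (hH : (H : Set G) ⊆ GBound G) :
    ∃ K : Subgroup H, (∀ a b : K, a * b = b * a) ∧ K.FiniteIndex :=
  ⟨Subgroup.center H, fun a b => Subtype.ext (Subgroup.mem_center_iff.mp b.2 a),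
    Subgroup.finiteIndex_center_of_finite_orbit fun t =>
      H.finite_orbit_conjAct (finite_orbit_conjAct_of_mem_GBound (hH t.2))⟩
end

section
/- Let D₈ be the dihedral group of order 8 and z the nontrivial element of its center, and let G = ℤ × D₈. Then for every finite symmetric generating set S of G one has l_S((0,z)) ≤ 4; consequently (0,z) ∈ G_bound and G_bound is nontrivial. -/
open scoped commutatorElement

section

variable {G : Type*} [Group G]

theorem wordLen_prod_le_length {S : Finset G} {w : List G} (hw : ∀ s ∈ w, s ∈ S) :
    wordLen S w.prod ≤ w.length :=
  Nat.sInf_le ⟨w, hw, rfl, rfl⟩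

theorem exists_commutatorElement_ne_one_of_closure_eq_top {S : Set G}
    (hS : Subgroup.closure S = ⊤) {a b : G} (hab : ⁅a, b⁆ ≠ 1) :
    ∃ s ∈ S, ∃ t ∈ S, ⁅s, t⁆ ≠ 1 := by
  by_contra! hS_comm
  have := Subgroup.isMulCommutative_closure fun s hs t ht =>
    commutatorElement_eq_one_iff_mul_comm.mp (hS_comm s hs t ht)
  have ha : a ∈ Subgroup.closure S := hS ▸ Subgroup.mem_top a
  have hb : b ∈ Subgroup.closure S := hS ▸ Subgroup.mem_top b
  exact hab (commutatorElement_eq_one_iff_mul_comm.mpr (setLike_mul_comm ha hb))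

theorem wordLen_le_four_of_commutatorElement_eq {S : Finset G} (hS : IsSymmGen S) {c : G}
    (hc : ∀ a b : G, ⁅a, b⁆ ≠ 1 → ⁅a, b⁆ = c) {a b : G} (hab : ⁅a, b⁆ ≠ 1) :
    wordLen S c ≤ 4 := by
  obtain ⟨s, hs, t, ht, hst⟩ := exists_commutatorElement_ne_one_of_closure_eq_top hS.2 hab
  have hw : ∀ x ∈ [s, t, s⁻¹, t⁻¹], x ∈ S := by
    simp only [List.mem_cons, List.not_mem_nil, or_false]
    rintro x (rfl | rfl | rfl | rfl) <;> first | assumption | exact hS.1 _ ‹_›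
  have hprod : [s, t, s⁻¹, t⁻¹].prod = c := by
    simp only [List.prod_cons, List.prod_nil, mul_one, ← mul_assoc, ← commutatorElement_def]
    exact hc s t hst
  simpa [hprod] using wordLen_prod_le_length hw

theorem GBound_ne_singleton_one {g : G} (hg : g ∈ GBound G) (hg1 : g ≠ 1) :
    GBound G ≠ {1} :=
  fun h => hg1 (by rwa [h] at hg)

end

theorem Prod.commutatorElement_of_commGroup {A H : Type*} [CommGroup A] [Group H]
    (p q : A × H) : ⁅p, q⁆ = (1, ⁅p.2, q.2⁆) := by
  ext
  · exact commutatorElement_eq_one_iff_mul_comm.mpr (mul_comm _ _)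
  · rfl

namespace DihedralGroup

theorem commutatorElement_eq_r_two (a b : DihedralGroup 4) (hab : ⁅a, b⁆ ≠ 1) :
    ⁅a, b⁆ = r 2 := by
  revert a b; decide

theorem eq_r_two_of_mem_center {z : DihedralGroup 4} (hz : z ≠ 1)
    (hzc : z ∈ Subgroup.center (DihedralGroup 4)) : z = r 2 := by
  rw [Subgroup.mem_center_iff] at hzc
  revert z; decide

end DihedralGroup

/-- For `G = ℤ × D₈` with `z` the nontrivial central element of `D₈`, the
element `(0, z)` has word length at most `4` for every finite symmetric
generating set; hence `(0, z) ∈ G_bound` and `G_bound` is nontrivial. -/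
theorem stmt11 (z : DihedralGroup 4) (hz : z ≠ 1)
    (hzc : z ∈ Subgroup.center (DihedralGroup 4)) :
    (∀ S : Finset (Multiplicative ℤ × DihedralGroup 4), IsSymmGen S →
      wordLen S (1, z) ≤ 4) ∧
    ((1, z) : Multiplicative ℤ × DihedralGroup 4) ∈
      GBound (Multiplicative ℤ × DihedralGroup 4) ∧
    GBound (Multiplicative ℤ × DihedralGroup 4) ≠ {1} := by
  have hcomm : ∀ p q : Multiplicative ℤ × DihedralGroup 4, ⁅p, q⁆ ≠ 1 → ⁅p, q⁆ = (1, z) := by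
    intro p q hpq
    rw [Prod.commutatorElement_of_commGroup] at hpq ⊢
    rw [DihedralGroup.eq_r_two_of_mem_center hz hzc,
      DihedralGroup.commutatorElement_eq_r_two _ _ fun h => hpq (by rw [h]; rfl)]
  have hlen : ∀ S : Finset (Multiplicative ℤ × DihedralGroup 4), IsSymmGen S →
      wordLen S (1, z) ≤ 4 := fun S hS =>
    wordLen_le_four_of_commutatorElement_eq hS hcomm (a := (1, DihedralGroup.r 1))
      (b := (1, DihedralGroup.sr 0)) (by decide)
  have hbound : ((1, z) : Multiplicative ℤ × DihedralGroup 4) ∈ GBound _ := ⟨4, by norm_num, hlen⟩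
  exact ⟨hlen, hbound, GBound_ne_singleton_one hbound fun h => hz (congrArg Prod.snd h)⟩
end

section
/- For G = ℤ: (a) G_bound(2) = ℤ, i.e. every integer has uniformly bounded word length over all symmetric generating sets of cardinality at most 2; (b) for every m ≥ 4, G_bound(m) = {0}: for every nonzero integer g and every constant K > 0 there exists a symmetric generating set S of ℤ of cardinality at most 4 with l_S(g) > K. -/
/-- A finite symmetric generating set of an additive group. -/
def IsSymmGenAdd {G : Type*} [AddGroup G] (S : Finset G) : Prop :=
  (∀ s ∈ S, -s ∈ S) ∧ AddSubgroup.closure (S : Set G) = ⊤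

/-- The word length of `g` with respect to `S`: the least `n` such that
`g` is a sum of `n` elements of `S`. -/
noncomputable def addWordLen {G : Type*} [AddGroup G] (S : Finset G) (g : G) : ℕ :=
  sInf {n : ℕ | ∃ w : List G, (∀ s ∈ w, s ∈ S) ∧ w.length = n ∧ w.sum = g}

/-- Elements of uniformly bounded word length. -/
def AddGBound (G : Type*) [AddGroup G] : Set G :=
  {g | ∃ M : ℕ, 0 < M ∧ ∀ S : Finset G, IsSymmGenAdd S → addWordLen S g ≤ M}

/-- Elements of uniformly bounded word length over symmetric generating sets of
cardinality at most `d`. -/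
def AddGBoundD (G : Type*) [AddGroup G] (d : ℕ) : Set G :=
  {g | ∃ M : ℕ, 0 < M ∧ ∀ S : Finset G, IsSymmGenAdd S → S.card ≤ d →
    addWordLen S g ≤ M}

/-!
A symmetric generating set of `ℤ` with at most two elements must be `{1, -1}`, so every `g`
has word length at most `|g|`. With four elements, take `S = {±N, ±(NK + 1)}` with
`N = K + |g| + 1`; these are coprime, so `S` generates. A word of length `ℓ` in `S` sums to
`aN + b(NK + 1)` with `|a| + |b| ≤ ℓ`, and `g - b = (a + bK)N`. Either `a + bK = 0`, which
forces `b = g` and `a = -gK`, or `|b| ≥ N - |g| > K`; in both cases `ℓ > K`.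
-/

section AddGroup

variable {G : Type*} [AddGroup G] {S : Finset G}

theorem addWordLen_sum_le {w : List G} (hw : ∀ s ∈ w, s ∈ S) :
    addWordLen S w.sum ≤ w.length :=
  Nat.sInf_le ⟨w, hw, rfl, rfl⟩

@[simp]
theorem addWordLen_zero (S : Finset G) : addWordLen S 0 = 0 :=
  Nat.le_zero.mp (addWordLen_sum_le (w := []) (by simp))

theorem addWordLen_zsmul_le {s : G} (hs : s ∈ S) (hs' : -s ∈ S) (n : ℤ) :
    addWordLen S (n • s) ≤ n.natAbs := by
  obtain ⟨k, rfl | rfl⟩ := Int.eq_nat_or_neg n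
  · simpa using addWordLen_sum_le (w := List.replicate k s)
      (fun t ht => (List.eq_of_mem_replicate ht).symm ▸ hs)
  · simpa using addWordLen_sum_le (w := List.replicate k (-s))
      (fun t ht => (List.eq_of_mem_replicate ht).symm ▸ hs')

theorem IsSymmGenAdd.exists_list_sum_eq (hS : IsSymmGenAdd S) (g : G) :
    ∃ w : List G, (∀ s ∈ w, s ∈ S) ∧ w.sum = g := by
  have hneg : -(S : Set G) ⊆ S := fun s hs => by simpa using hS.1 _ hs
  have hg : g ∈ (AddSubgroup.closure (S : Set G)).toAddSubmonoid := hS.2 ▸ AddSubgroup.mem_top g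
  rw [AddSubgroup.closure_toAddSubmonoid, Set.union_eq_left.mpr hneg] at hg
  exact AddSubmonoid.exists_list_of_mem_closure hg

theorem IsSymmGenAdd.le_addWordLen (hS : IsSymmGenAdd S) {g : G} {n : ℕ}
    (h : ∀ w : List G, (∀ s ∈ w, s ∈ S) → w.sum = g → n ≤ w.length) :
    n ≤ addWordLen S g := by
  obtain ⟨w, hw, hsum⟩ := hS.exists_list_sum_eq g
  refine le_csInf ⟨w.length, w, hw, rfl, hsum⟩ ?_
  rintro _ ⟨w, hw, rfl, hsum⟩
  exact h w hw hsum

end AddGroup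

theorem List.exists_sum_eq_zsmul_add_zsmul {G : Type*} [AddCommGroup G] {p q : G} (w : List G)
    (hw : ∀ s ∈ w, s ∈ ({p, -p, q, -q} : Set G)) :
    ∃ a b : ℤ, w.sum = a • p + b • q ∧ a.natAbs + b.natAbs ≤ w.length := by
  induction w with
  | nil => exact ⟨0, 0, by simp, by simp⟩
  | cons s w ih =>
    obtain ⟨a, b, hsum, hlen⟩ := ih fun t ht => hw t (List.mem_cons_of_mem _ ht)
    have := Int.natAbs_add_le a 1
    have := Int.natAbs_add_le a (-1)
    have := Int.natAbs_add_le b 1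
    have := Int.natAbs_add_le b (-1)
    rcases hw s List.mem_cons_self with rfl | rfl | rfl | rfl
    · exact ⟨a + 1, b, by rw [List.sum_cons, hsum, add_zsmul]; abel, by simp; omega⟩
    · exact ⟨a - 1, b, by rw [List.sum_cons, hsum, sub_zsmul]; abel, by simp; omega⟩
    · exact ⟨a, b + 1, by rw [List.sum_cons, hsum, add_zsmul]; abel, by simp; omega⟩
    · exact ⟨a, b - 1, by rw [List.sum_cons, hsum, sub_zsmul]; abel, by simp; omega⟩

namespace Int

theorem isSymmGenAdd_of_isCoprime {p q : ℤ} (h : IsCoprime p q) :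
    IsSymmGenAdd ({p, -p, q, -q} : Finset ℤ) := by
  refine ⟨fun s hs => ?_, eq_top_iff.mpr fun x _ => ?_⟩
  · simp only [Finset.mem_insert, Finset.mem_singleton] at hs ⊢
    omega
  · obtain ⟨u, v, huv⟩ := h
    have hpq : ({p, q} : Set ℤ) ⊆ ({p, -p, q, -q} : Finset ℤ) := by
      simp [Set.insert_subset_iff]
    refine AddSubgroup.closure_mono hpq <| AddSubgroup.mem_closure_pair.mpr ⟨x * u, x * v, ?_⟩
    simp only [smul_eq_mul]
    linear_combination x * huv

theorem eq_pair_one_neg_one_of_isSymmGenAdd {S : Finset ℤ} (hS : IsSymmGenAdd S)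
    (hcard : S.card ≤ 2) : S = {1, -1} := by
  obtain ⟨a, ha, ha0⟩ : ∃ a ∈ S, a ≠ 0 := by
    by_contra! h
    have : AddSubgroup.closure (S : Set ℤ) = ⊥ := AddSubgroup.closure_eq_bot_iff.mpr h
    exact bot_ne_top (this.symm.trans hS.2)
  have hpair : S = {a, -a} := by
    refine (Finset.eq_of_subset_of_card_le ?_ ?_).symm
    · simp [Finset.insert_subset_iff, ha, hS.1 a ha]
    · rw [Finset.card_pair (by omega)]; exact hcard
  have hone : (1 : ℤ) ∈ AddSubgroup.closure (S : Set ℤ) := hS.2 ▸ AddSubgroup.mem_top 1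
  rw [hpair, Finset.coe_pair] at hone
  obtain ⟨m, n, hmn⟩ := AddSubgroup.mem_closure_pair.mp hone
  have : (m - n) * a = 1 := by simp only [smul_eq_mul] at hmn; linear_combination hmn
  rcases Int.eq_one_or_neg_one_of_mul_eq_one' this with ⟨-, rfl⟩ | ⟨-, rfl⟩
  · exact hpair
  · simpa [Finset.pair_comm] using hpair

theorem lt_natAbs_add_natAbs_of_eq_mul_add_mul {K : ℕ} {N a b g : ℤ} (hN : K + g.natAbs < N)
    (hg : g ≠ 0) (h : g = a * N + b * (N * K + 1)) : K < a.natAbs + b.natAbs := by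
  have hb : g - b = (a + b * K) * N := by linear_combination h
  rcases eq_or_ne (a + b * K) 0 with ht | ht
  · have hbg : b = g := by rw [ht, zero_mul] at hb; omega
    have hag : a = -(g * K) := by linear_combination ht - K * hbg
    have : K ≤ g.natAbs * K := Nat.le_mul_of_pos_left K (by omega)
    rw [hbg, hag, natAbs_neg, natAbs_mul, natAbs_natCast]
    omega
  · have : N.natAbs ≤ (g - b).natAbs := by
      rw [hb, natAbs_mul]
      exact Nat.le_mul_of_pos_left _ (natAbs_pos.mpr ht)
    have := natAbs_sub_le g b
    omega

theorem exists_isSymmGenAdd_card_le_four_lt_addWordLen {g : ℤ} (hg : g ≠ 0) (K : ℕ) :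
    ∃ S : Finset ℤ, IsSymmGenAdd S ∧ S.card ≤ 4 ∧ K < addWordLen S g := by
  set N : ℤ := K + g.natAbs + 1 with hN
  have hS : IsSymmGenAdd ({N, -N, N * K + 1, -(N * K + 1)} : Finset ℤ) :=
    isSymmGenAdd_of_isCoprime ⟨-K, 1, by ring⟩
  refine ⟨_, hS, Finset.card_le_four, hS.le_addWordLen fun w hw hsum => ?_⟩
  obtain ⟨a, b, hab, hlen⟩ := w.exists_sum_eq_zsmul_add_zsmul (p := N) (q := N * K + 1)
    (by simpa using hw)
  refine (lt_natAbs_add_natAbs_of_eq_mul_add_mul (N := N) (by omega) hg ?_).trans_le hlen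
  simpa [← hsum] using hab

end Int

/-- For `G = ℤ`: `G_bound(2) = ℤ`, while `G_bound(m) = {0}` for every `m ≥ 4`;
indeed every nonzero integer has unbounded word length over symmetric
generating sets of cardinality at most `4`. -/
theorem stmt16 :
    AddGBoundD ℤ 2 = Set.univ ∧
    (∀ m : ℕ, 4 ≤ m → AddGBoundD ℤ m = {0}) ∧
    (∀ g : ℤ, g ≠ 0 → ∀ K : ℕ, 0 < K →
      ∃ S : Finset ℤ, IsSymmGenAdd S ∧ S.card ≤ 4 ∧ K < addWordLen S g) := by
  refine ⟨?_, fun m hm => ?_, fun g hg K _ =>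
    Int.exists_isSymmGenAdd_card_le_four_lt_addWordLen hg K⟩
  · refine Set.eq_univ_of_forall fun g => ⟨g.natAbs + 1, by omega, fun S hS hcard => ?_⟩
    have hle := addWordLen_zsmul_le (S := {1, -1}) (s := 1) (by simp) (by simp) g
    rw [Int.eq_pair_one_neg_one_of_isSymmGenAdd hS hcard]
    simpa using hle.trans (Nat.le_succ _)
  · refine Set.eq_singleton_iff_unique_mem.mpr ⟨⟨1, one_pos, fun S _ _ => by simp⟩, ?_⟩
    rintro g ⟨M, hM, hbound⟩
    by_contra hg
    obtain ⟨S, hS, hcard, hlt⟩ := Int.exists_isSymmGenAdd_card_le_four_lt_addWordLen hg M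
    exact (hbound S hS (hcard.trans hm)).not_gt hlt
end
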